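/- arXiv:1701.04548 — 6 statements merged into one kernel-verified Lean document; each statement's English description precedes it below -/
import Mathlib

section
/- Let a_1, ..., a_n be nonnegative reals with arithmetic mean A = (a_1 + ... + a_n)/n and geometric mean G = (a_1 ⋯ a_n)^{1/n}. Then A - G ≥ (1/(n(n-1))) · Σ_{1 ≤ i < j ≤ n} (√a_i - √a_j)². -/
/-! With `b i = √(a i)`, the products `b i * b j` over the `n (n - 1)` ordered pairs `i ≠ j` have
geometric mean `G` and arithmetic mean `((∑ b) ^ 2 - ∑ b ^ 2) / (n (n - 1))`, so AM-GM applied to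
them bounds `G`. Lagrange's identity `∑_{i<j} (b i - b j) ^ 2 = n ∑ b ^ 2 - (∑ b) ^ 2` turns
`A` minus that bound into the right-hand side. -/

open Finset Real

namespace Finset

section OffDiag

variable {ι M : Type*} [DecidableEq ι] (s : Finset ι)

theorem prod_offDiag_fst [CommMonoid M] (f : ι → M) :
    ∏ p ∈ s.offDiag, f p.1 = ∏ i ∈ s, f i ^ (#s - 1) := by
  rw [prod_finset_product _ s (fun i => s.erase i) (by simp [ne_comm, and_comm])]
  exact prod_congr rfl fun i hi => by rw [← card_erase_of_mem hi]; exact prod_const (f i)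

theorem prod_offDiag_snd [CommMonoid M] (f : ι → M) :
    ∏ p ∈ s.offDiag, f p.2 = ∏ i ∈ s, f i ^ (#s - 1) := by
  rw [prod_finset_product_right _ s (fun i => s.erase i) (by simp; tauto)]
  exact prod_congr rfl fun i hi => by rw [← card_erase_of_mem hi]; exact prod_const (f i)

theorem prod_offDiag_mul [CommMonoid M] (f : ι → M) :
    ∏ p ∈ s.offDiag, f p.1 * f p.2 = (∏ i ∈ s, f i ^ 2) ^ (#s - 1) := by
  rw [prod_mul_distrib, prod_offDiag_fst, prod_offDiag_snd, ← prod_mul_distrib, ← prod_pow]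
  simp_rw [← mul_pow, ← sq]

theorem sum_offDiag_mul [CommRing M] (f : ι → M) :
    ∑ p ∈ s.offDiag, f p.1 * f p.2 = (∑ i ∈ s, f i) ^ 2 - ∑ i ∈ s, f i ^ 2 := by
  have hdiag : ∑ p ∈ s.diag, f p.1 * f p.2 = ∑ i ∈ s, f i ^ 2 := by
    simp [diag, sq]
  rw [sq, sum_mul_sum, ← sum_product', ← diag_union_offDiag, sum_union (disjoint_diag_offDiag s),
    hdiag, add_sub_cancel_left]

end OffDiag

theorem sum_sum_ite_lt_sub_sq {ι R : Type*} [LinearOrder ι] [CommRing R] [IsDomain R]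
    [CharZero R] (s : Finset ι) (f : ι → R) :
    ∑ i ∈ s, ∑ j ∈ s, (if i < j then (f i - f j) ^ 2 else 0) =
      #s * ∑ i ∈ s, f i ^ 2 - (∑ i ∈ s, f i) ^ 2 := by
  have hfull : ∑ i ∈ s, ∑ j ∈ s, (f i - f j) ^ 2 =
      2 * (#s * ∑ i ∈ s, f i ^ 2 - (∑ i ∈ s, f i) ^ 2) := by
    simp only [sub_sq, sum_add_distrib, sum_sub_distrib, ← mul_sum, ← sum_mul, sum_const,
      nsmul_eq_mul]
    ring
  have hsplit (i j : ι) : (f i - f j) ^ 2 =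
      (if i < j then (f i - f j) ^ 2 else 0) + (if j < i then (f j - f i) ^ 2 else 0) := by
    rcases lt_trichotomy i j with h | rfl | h
    · simp [h, h.not_gt]
    · simp
    · simp [h, h.not_gt, sub_sq_comm (f i)]
  rw [sum_congr rfl fun i _ => sum_congr rfl fun j _ => hsplit i j] at hfull
  simp only [sum_add_distrib] at hfull
  rw [sum_comm (f := fun i j => if j < i then _ else _)] at hfull
  exact mul_left_cancel₀ two_ne_zero (by linear_combination hfull)

end Finset

namespace Real

variable {ι : Type*} {s : Finset ι} {f : ι → ℝ}

theorem prod_sq_rpow_one_div_card_le (hf : ∀ i ∈ s, 0 ≤ f i) (hs : 2 ≤ #s) :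
    (∏ i ∈ s, f i ^ 2) ^ ((1 : ℝ) / #s) ≤
      ((∑ i ∈ s, f i) ^ 2 - ∑ i ∈ s, f i ^ 2) / (#s * (#s - 1)) := by
  classical
  have hz : ∀ p ∈ s.offDiag, 0 ≤ f p.1 * f p.2 := fun p hp =>
    mul_nonneg (hf _ (mem_offDiag.1 hp).1) (hf _ (mem_offDiag.1 hp).2.1)
  have hcard : (#s.offDiag : ℝ) = #s * (#s - 1) := by
    rw [offDiag_card, Nat.cast_sub (Nat.le_mul_self _)]; push_cast; ring
  have amgm := geom_mean_le_arith_mean s.offDiag (fun _ => 1) (fun p => f p.1 * f p.2)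
    (fun _ _ => zero_le_one) (by simp; omega) hz
  simp only [rpow_one, one_mul, sum_const, nsmul_eq_mul, mul_one] at amgm
  rw [prod_offDiag_mul, sum_offDiag_mul, hcard] at amgm
  convert amgm using 1
  rw [← rpow_natCast, ← rpow_mul (prod_nonneg fun i _ => sq_nonneg (f i)),
    Nat.cast_sub (by omega), Nat.cast_one]
  have : (#s : ℝ) - 1 ≠ 0 := by
    rw [sub_ne_zero]; exact_mod_cast (by omega : #s ≠ 1)
  field_simp

theorem one_div_mul_sum_ite_lt_sub_sq_le_mean_sub_geom_mean [LinearOrder ι]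
    (hf : ∀ i ∈ s, 0 ≤ f i) (hs : 2 ≤ #s) :
    1 / (#s * (#s - 1) : ℝ) * ∑ i ∈ s, ∑ j ∈ s, (if i < j then (f i - f j) ^ 2 else 0) ≤
      (∑ i ∈ s, f i ^ 2) / #s - (∏ i ∈ s, f i ^ 2) ^ ((1 : ℝ) / #s) := by
  have hgeom := prod_sq_rpow_one_div_card_le hf hs
  have : (#s : ℝ) - 1 ≠ 0 := by
    rw [sub_ne_zero]; exact_mod_cast (by omega : #s ≠ 1)
  have hsplit : 1 / (#s * (#s - 1) : ℝ) * (#s * ∑ i ∈ s, f i ^ 2 - (∑ i ∈ s, f i) ^ 2) =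
      (∑ i ∈ s, f i ^ 2) / #s -
        ((∑ i ∈ s, f i) ^ 2 - ∑ i ∈ s, f i ^ 2) / (#s * (#s - 1)) := by
    field_simp
    ring
  rw [sum_sum_ite_lt_sub_sq, hsplit]
  linarith

end Real

theorem amgm_pairs (n : ℕ) (hn : 2 ≤ n) (a : ℕ → ℝ)
    (ha : ∀ i ∈ Finset.Icc 1 n, 0 ≤ a i) :
    (∑ i ∈ Finset.Icc 1 n, a i) / n - (∏ i ∈ Finset.Icc 1 n, a i) ^ ((1 : ℝ) / n) ≥
      (1 / (n * (n - 1) : ℝ)) *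
        ∑ i ∈ Finset.Icc 1 n, ∑ j ∈ Finset.Icc 1 n,
          if i < j then (Real.sqrt (a i) - Real.sqrt (a j)) ^ 2 else 0 := by
  have hsq : ∀ i ∈ Icc 1 n, a i = √(a i) ^ 2 := fun i hi => (sq_sqrt (ha i hi)).symm
  have hcard : #(Icc 1 n) = n := Nat.card_Icc 1 n
  have := one_div_mul_sum_ite_lt_sub_sq_le_mean_sub_geom_mean (s := Icc 1 n)
    (fun i _ => sqrt_nonneg (a i)) (by rwa [hcard])
  rwa [hcard, ← sum_congr rfl hsq, ← prod_congr rfl hsq] at this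
end

section
/- Let a_1, ..., a_n be nonnegative reals with arithmetic mean A and geometric mean G, and let σ be any permutation of {1,...,n} with b_j = a_{σ(j)}. Then A - G ≥ (1/n) · Σ_{j=1}^{⌊n/2⌋} (√b_j - √b_{n+1-j})². -/
/-!
Pair each `b j` with its mirror `b (n + 1 - j)`. The numbers `√(b j * b (n + 1 - j))` have the
same product as the `a i`, so by AM-GM `G` is at most their mean; and the mean of the `b j` exceeds
that mean by `(1 / 2n) ∑ j, (√(b j) - √(b (n + 1 - j)))²` over all `j`, a sum in which every pair
occurs twice and the middle term, if any, vanishes.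
-/

open Finset Real

section Reindex

variable {ι : Type*} {s : Finset ι} {r : ι → ι}

@[to_additive]
lemma Finset.prod_comp_of_bijOn {M : Type*} [CommMonoid M] (hr : Set.BijOn r s s) (f : ι → M) :
    ∏ i ∈ s, f (r i) = ∏ i ∈ s, f i :=
  prod_nbij r hr.mapsTo hr.injOn hr.surjOn fun _ _ => rfl

variable {x : ι → ℝ}

lemma Real.prod_sqrt_mul_comp_of_bijOn (hr : Set.BijOn r s s) (hx : ∀ i ∈ s, 0 ≤ x i) :
    ∏ i ∈ s, √(x i * x (r i)) = ∏ i ∈ s, x i :=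
  calc ∏ i ∈ s, √(x i * x (r i)) = (∏ i ∈ s, √(x i)) * ∏ i ∈ s, √(x (r i)) := by
        rw [← prod_mul_distrib]
        exact prod_congr rfl fun i hi => sqrt_mul (hx i hi) _
    _ = ∏ i ∈ s, √(x i) * √(x i) := by
        rw [prod_comp_of_bijOn hr fun i => √(x i), prod_mul_distrib]
    _ = ∏ i ∈ s, x i := prod_congr rfl fun i hi => mul_self_sqrt (hx i hi)

lemma Real.sum_sq_sqrt_sub_sqrt_comp_of_bijOn (hr : Set.BijOn r s s) (hx : ∀ i ∈ s, 0 ≤ x i) :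
    ∑ i ∈ s, (√(x i) - √(x (r i))) ^ 2 = 2 * (∑ i ∈ s, x i - ∑ i ∈ s, √(x i * x (r i))) := by
  have expand : ∀ i ∈ s,
      (√(x i) - √(x (r i))) ^ 2 = x i + x (r i) - 2 * √(x i * x (r i)) := fun i hi => by
    rw [sub_sq, sq_sqrt (hx i hi), sq_sqrt (hx _ (hr.mapsTo hi)), sqrt_mul (hx i hi)]
    ring
  rw [sum_congr rfl expand, sum_sub_distrib, sum_add_distrib, sum_comp_of_bijOn hr x, ← mul_sum]
  ring

theorem Real.sum_sq_sqrt_sub_div_le_arith_mean_sub_geom_mean (hs : s.Nonempty)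
    (hr : Set.BijOn r s s) (hx : ∀ i ∈ s, 0 ≤ x i) :
    (∑ i ∈ s, (√(x i) - √(x (r i))) ^ 2) / (2 * #s) ≤
      (∑ i ∈ s, x i) / #s - (∏ i ∈ s, x i) ^ ((1 : ℝ) / #s) := by
  have amgm : (∏ i ∈ s, x i) ^ ((1 : ℝ) / #s) ≤ (∑ i ∈ s, √(x i * x (r i))) / #s := by
    have := geom_mean_le_arith_mean s (fun _ => 1) (fun i => √(x i * x (r i))) (by simp)
      (by simpa using hs) fun _ _ => sqrt_nonneg _
    simpa [prod_sqrt_mul_comp_of_bijOn hr hx] using this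
  have hcard : (0 : ℝ) < #s := by simpa using hs.card_pos
  rw [sum_sq_sqrt_sub_sqrt_comp_of_bijOn hr hx, mul_div_mul_left _ _ two_ne_zero, sub_div]
  linarith

end Reindex

lemma Nat.bijOn_sub_Icc (n : ℕ) : Set.BijOn (fun j => n + 1 - j) (Icc 1 n) (Icc 1 n) := by
  refine Set.InvOn.bijOn (f' := fun j => n + 1 - j) ⟨?_, ?_⟩ ?_ ?_ <;>
    intro j hj <;> simp only [coe_Icc, Set.mem_Icc] at hj ⊢ <;> omega

lemma Finset.sum_Icc_eq_two_nsmul_sum_Icc_half {M : Type*} [AddCommMonoid M] (n : ℕ)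
    (g : ℕ → M) (hsymm : ∀ j ∈ Icc 1 n, g (n + 1 - j) = g j)
    (hfix : ∀ j, n + 1 - j = j → g j = 0) :
    ∑ j ∈ Icc 1 n, g j = 2 • ∑ j ∈ Icc 1 (n / 2), g j := by
  set m := n / 2
  have middle : ∑ j ∈ Ioc m (n - m), g j = 0 :=
    sum_eq_zero fun j hj => hfix j (by simp only [mem_Ioc] at hj; omega)
  have upper : ∑ j ∈ Ioc (n - m) n, g j = ∑ j ∈ Ioc 0 m, g j := by
    refine sum_nbij' (fun j => n + 1 - j) (fun j => n + 1 - j) ?_ ?_ ?_ ?_ fun j hj => ?_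
    · intro j hj; simp only [mem_Ioc] at hj ⊢; omega
    · intro j hj; simp only [mem_Ioc] at hj ⊢; omega
    · intro j hj; simp only [mem_Ioc] at hj; omega
    · intro j hj; simp only [mem_Ioc] at hj; omega
    · exact (hsymm j (by simp only [mem_Ioc, mem_Icc] at hj ⊢; omega)).symm
  rw [show Icc 1 n = Ioc 0 n from Icc_add_one_left_eq_Ioc 0 n,
    show Icc 1 m = Ioc 0 m from Icc_add_one_left_eq_Ioc 0 m,
    ← sum_Ioc_consecutive g (Nat.zero_le m) (show m ≤ n by omega),
    ← sum_Ioc_consecutive g (show m ≤ n - m by omega) (Nat.sub_le n m), middle, upper]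
  simp [two_nsmul]

theorem amgm_permutation (n : ℕ) (hn : 0 < n) (a : ℕ → ℝ)
    (ha : ∀ i ∈ Finset.Icc 1 n, 0 ≤ a i)
    (σ : Equiv.Perm ℕ) (hσ : ∀ i ∈ Finset.Icc 1 n, σ i ∈ Finset.Icc 1 n) :
    (∑ i ∈ Finset.Icc 1 n, a i) / n - (∏ i ∈ Finset.Icc 1 n, a i) ^ ((1 : ℝ) / n) ≥
      (1 / (n : ℝ)) *
        ∑ j ∈ Finset.Icc 1 (n / 2),
          (Real.sqrt (a (σ j)) - Real.sqrt (a (σ (n + 1 - j)))) ^ 2 := by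
  have hσ_bij : Set.BijOn σ (Icc 1 n) (Icc 1 n) :=
    ((Icc 1 n).finite_toSet.injOn_iff_bijOn_of_mapsTo hσ).1 σ.injective.injOn
  have key := sum_sq_sqrt_sub_div_le_arith_mean_sub_geom_mean (nonempty_Icc.2 hn)
    (Nat.bijOn_sub_Icc n) fun i hi => ha _ (hσ i hi)
  rw [sum_comp_of_bijOn hσ_bij a, prod_comp_of_bijOn hσ_bij a, Nat.card_Icc, Nat.add_sub_cancel,
    sum_Icc_eq_two_nsmul_sum_Icc_half n _ (fun j hj => ?_) fun j hj => by simp [hj]] at key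
  · rw [ge_iff_le]
    convert key using 1
    ring
  · simp only [mem_Icc] at hj
    rw [Nat.sub_sub_self (by omega : j ≤ n + 1), sub_sq_comm]
end

section
/- Let x_1, ..., x_s be nonnegative reals, let m ≥ s ≥ 2, and let k_1, ..., k_s be positive integers with k_1 + ... + k_s = m. Then (k_1 x_1^m + ... + k_s x_s^m)/m - x_1^{k_1} x_2^{k_2} ⋯ x_s^{k_s} ≥ (1/(m(m-1))) · Σ_{1 ≤ i < j ≤ s} (x_i^{m/2} - x_j^{m/2})². -/
/-!
Write `b i = √(x i ^ m)` and think of `k i` tokens of colour `i`, `m` tokens in all. AM-GM over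
the `m (m - 1)` ordered pairs of distinct tokens, a pair of colours `(i, j)` contributing
`b i * b j`, gives `m (m - 1) ∏ x i ^ k i ≤ (∑ k i b i)² - ∑ k i (b i)²`, because every token lies
in `2 (m - 1)` of these pairs. By Lagrange's identity
`∑_{i<j} k i k j (b i - b j)² = m ∑ k i (b i)² - (∑ k i b i)²`, this is the claim with the
weights `k i k j ≥ 1` in front of the squares, which can then be dropped.
-/

open Finset Real

theorem prod_pow_le_weighted_mean_pow {ι : Type*} (s : Finset ι) (N : ι → ℕ) (z : ι → ℝ)
    (hz : ∀ i ∈ s, 0 ≤ z i) :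
    ∏ i ∈ s, z i ^ N i ≤ ((∑ i ∈ s, N i * z i) / ∑ i ∈ s, N i) ^ ∑ i ∈ s, N i := by
  set n := ∑ i ∈ s, N i with hn
  rcases Nat.eq_zero_or_pos n with h0 | hpos
  · rw [h0, pow_zero]
    exact (prod_eq_one fun i hi => by rw [sum_eq_zero_iff.1 h0 i hi, pow_zero]).le
  have hmean := Real.geom_mean_le_arith_mean s (fun i => (N i : ℝ)) z
    (fun i _ => Nat.cast_nonneg _) (by exact_mod_cast hpos) hz
  simp only [← Nat.cast_sum, ← hn, rpow_natCast] at hmean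
  have hprod : 0 ≤ ∏ i ∈ s, z i ^ N i := prod_nonneg fun i hi => pow_nonneg (hz i hi) _
  calc ∏ i ∈ s, z i ^ N i = ((∏ i ∈ s, z i ^ N i) ^ (n⁻¹ : ℝ)) ^ n :=
        (rpow_inv_natCast_pow hprod hpos.ne').symm
    _ ≤ _ := pow_le_pow_left₀ (rpow_nonneg hprod _) hmean n

section PairWeight

variable {ι : Type*} [DecidableEq ι] (k : ι → ℕ)

/-- The number of ordered pairs of distinct tokens of colours `i` and `j`, when there are `k c`
tokens of each colour `c`. -/
def pairWeight (i j : ι) : ℕ := k i * k j - if i = j then k i else 0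

variable {k}

theorem pairWeight_comm (i j : ι) : pairWeight k i j = pairWeight k j i := by
  by_cases h : i = j
  · rw [h]
  · simp only [pairWeight, if_neg h, if_neg (Ne.symm h), mul_comm]

theorem ite_self_le_mul (i j : ι) : (if i = j then k i else 0) ≤ k i * k j := by
  split_ifs with h
  · rw [h]; exact Nat.le_mul_self _
  · exact Nat.zero_le _

theorem cast_pairWeight {R : Type*} [Ring R] (i j : ι) :
    (pairWeight k i j : R) = k i * k j - if i = j then (k i : R) else 0 := by
  rw [pairWeight, Nat.cast_sub (ite_self_le_mul i j)]
  push_cast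
  rfl

theorem sum_pairWeight_left {s : Finset ι} {i : ι} (hi : i ∈ s) :
    ∑ j ∈ s, pairWeight k i j = k i * (∑ j ∈ s, k j - 1) := by
  unfold pairWeight
  rw [sum_tsub_distrib _ fun j _ => ite_self_le_mul i j, ← mul_sum,
    sum_ite_eq, if_pos hi, Nat.mul_sub_one]

theorem sum_sum_pairWeight (s : Finset ι) :
    ∑ i ∈ s, ∑ j ∈ s, pairWeight k i j = (∑ i ∈ s, k i) * (∑ i ∈ s, k i - 1) := by
  rw [sum_congr rfl fun i hi => sum_pairWeight_left hi, sum_mul]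

theorem prod_prod_mul_pow_pairWeight {M : Type*} [CommMonoid M] (s : Finset ι) (b : ι → M) :
    ∏ i ∈ s, ∏ j ∈ s, (b i * b j) ^ pairWeight k i j =
      (∏ i ∈ s, b i ^ k i) ^ (2 * (∑ i ∈ s, k i - 1)) := by
  have hrow : ∏ i ∈ s, ∏ j ∈ s, b i ^ pairWeight k i j =
      (∏ i ∈ s, b i ^ k i) ^ (∑ i ∈ s, k i - 1) := by
    simp only [prod_pow_eq_pow_sum]
    rw [← prod_pow]
    exact prod_congr rfl fun i hi => by rw [sum_pairWeight_left hi, pow_mul]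
  simp only [mul_pow, prod_mul_distrib]
  rw [prod_comm (f := fun i j => b j ^ pairWeight k i j)]
  simp only [pairWeight_comm (k := k) _ (_ : ι)]
  rw [hrow, ← pow_add, two_mul]

theorem sum_sum_pairWeight_mul {R : Type*} [CommRing R] (s : Finset ι) (b : ι → R) :
    ∑ i ∈ s, ∑ j ∈ s, (pairWeight k i j : R) * (b i * b j) =
      (∑ i ∈ s, k i * b i) ^ 2 - ∑ i ∈ s, k i * b i ^ 2 := by
  simp only [cast_pairWeight, sub_mul, sum_sub_distrib, ite_mul, zero_mul, sum_ite_eq, sq,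
    sum_mul_sum]
  congr 1
  · exact sum_congr rfl fun i _ => sum_congr rfl fun j _ => by ring
  · exact sum_congr rfl fun i hi => if_pos hi

end PairWeight

theorem two_mul_sum_sum_ite_lt {ι R : Type*} [LinearOrder ι] [Semiring R] (s : Finset ι)
    (f : ι → ι → R) (hf : ∀ i j, f i j = f j i) (hdiag : ∀ i, f i i = 0) :
    2 * ∑ i ∈ s, ∑ j ∈ s, (if i < j then f i j else 0) = ∑ i ∈ s, ∑ j ∈ s, f i j := by
  have hsplit : ∀ i j, f i j = (if i < j then f i j else 0) + (if j < i then f j i else 0) := by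
    intro i j
    rcases lt_trichotomy i j with h | rfl | h
    · rw [if_pos h, if_neg h.not_gt, add_zero]
    · simp [hdiag]
    · rw [if_neg h.not_gt, if_pos h, zero_add, hf]
  rw [sum_congr rfl fun i _ => sum_congr rfl fun j _ => hsplit i j]
  simp only [sum_add_distrib]
  rw [sum_comm (f := fun i j => if j < i then f j i else 0), two_mul]

theorem sum_sum_ite_lt_mul_mul_sub_sq {ι R : Type*} [LinearOrder ι] [CommRing R] [IsDomain R]
    [CharZero R] (s : Finset ι) (w b : ι → R) :
    ∑ i ∈ s, ∑ j ∈ s, (if i < j then w i * w j * (b i - b j) ^ 2 else 0) =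
      (∑ i ∈ s, w i) * (∑ i ∈ s, w i * b i ^ 2) - (∑ i ∈ s, w i * b i) ^ 2 := by
  refine mul_left_cancel₀ (two_ne_zero (α := R)) ?_
  rw [two_mul_sum_sum_ite_lt s _ (fun i j => by ring) (fun i => by ring)]
  have hleft : (∑ i ∈ s, w i) * (∑ i ∈ s, w i * b i ^ 2) =
      ∑ i ∈ s, ∑ j ∈ s, w i * w j * b i ^ 2 := by
    rw [mul_comm, sum_mul_sum]
    exact sum_congr rfl fun i _ => sum_congr rfl fun j _ => by ring
  have hright : (∑ i ∈ s, w i) * (∑ i ∈ s, w i * b i ^ 2) =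
      ∑ i ∈ s, ∑ j ∈ s, w i * w j * b j ^ 2 := by
    rw [sum_mul_sum]
    exact sum_congr rfl fun i _ => sum_congr rfl fun j _ => by ring
  have hcross : (∑ i ∈ s, w i * b i) ^ 2 = ∑ i ∈ s, ∑ j ∈ s, w i * w j * (b i * b j) := by
    rw [sq, sum_mul_sum]
    exact sum_congr rfl fun i _ => sum_congr rfl fun j _ => by ring
  calc ∑ i ∈ s, ∑ j ∈ s, w i * w j * (b i - b j) ^ 2
      = ∑ i ∈ s, ∑ j ∈ s, w i * w j * b i ^ 2 + ∑ i ∈ s, ∑ j ∈ s, w i * w j * b j ^ 2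
          - 2 * ∑ i ∈ s, ∑ j ∈ s, w i * w j * (b i * b j) := by
        simp only [mul_sum, ← sum_add_distrib, ← sum_sub_distrib]
        exact sum_congr rfl fun i _ => sum_congr rfl fun j _ => by ring
    _ = _ := by rw [← hleft, ← hright, ← hcross]; ring

theorem geom_mean_le_arith_mean_distinct_pairs {ι : Type*} [DecidableEq ι] (s : Finset ι)
    (k : ι → ℕ) (m : ℕ) (hm : ∑ i ∈ s, k i = m) (x : ι → ℝ) (hx : ∀ i ∈ s, 0 ≤ x i) :
    (m : ℝ) * (m - 1) * ∏ i ∈ s, x i ^ k i ≤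
      (∑ i ∈ s, k i * √(x i ^ m)) ^ 2 - ∑ i ∈ s, k i * x i ^ m := by
  have hsq : ∀ i ∈ s, √(x i ^ m) ^ 2 = x i ^ m := fun i hi => sq_sqrt (pow_nonneg (hx i hi) m)
  have harith : ∑ i ∈ s, ∑ j ∈ s, (pairWeight k i j : ℝ) * (√(x i ^ m) * √(x j ^ m)) =
      (∑ i ∈ s, k i * √(x i ^ m)) ^ 2 - ∑ i ∈ s, k i * x i ^ m := by
    rw [sum_sum_pairWeight_mul]
    exact congrArg _ (sum_congr rfl fun i hi => by rw [hsq i hi])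
  have hgeom : ∏ i ∈ s, ∏ j ∈ s, (√(x i ^ m) * √(x j ^ m)) ^ pairWeight k i j =
      (∏ i ∈ s, x i ^ k i) ^ (m * (m - 1)) := by
    rw [prod_prod_mul_pow_pairWeight, hm, pow_mul, ← prod_pow, pow_mul]
    congr 1
    rw [← prod_pow]
    refine prod_congr rfl fun i hi => ?_
    rw [← pow_mul, mul_comm, pow_mul, hsq i hi, ← pow_mul, mul_comm, pow_mul]
  have hamgm := prod_pow_le_weighted_mean_pow (s ×ˢ s) (fun p => pairWeight k p.1 p.2)
    (fun p => √(x p.1 ^ m) * √(x p.2 ^ m)) fun p _ => by positivity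
  simp only [prod_product, sum_product] at hamgm
  rw [sum_sum_pairWeight, hm, hgeom, harith] at hamgm
  have hnonneg : 0 ≤ (∑ i ∈ s, k i * √(x i ^ m)) ^ 2 - ∑ i ∈ s, k i * x i ^ m :=
    harith ▸ sum_nonneg fun i _ => sum_nonneg fun j _ => by positivity
  have hcast : ((m * (m - 1) : ℕ) : ℝ) = m * (m - 1) := by
    rcases m with _ | m <;> simp
  rcases Nat.eq_zero_or_pos (m * (m - 1)) with h0 | hpos
  · rw [← hcast, h0, Nat.cast_zero, zero_mul]
    exact hnonneg
  rw [pow_le_pow_iff_left₀ (prod_nonneg fun i hi => pow_nonneg (hx i hi) _)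
    (div_nonneg hnonneg (Nat.cast_nonneg _)) hpos.ne', le_div_iff₀ (by exact_mod_cast hpos),
    hcast, mul_comm] at hamgm
  exact hamgm

theorem sum_sum_ite_lt_mul_mul_sq_le {ι : Type*} [LinearOrder ι] (s : Finset ι) (k : ι → ℕ)
    (m : ℕ) (hm : ∑ i ∈ s, k i = m) (x : ι → ℝ) (hx : ∀ i ∈ s, 0 ≤ x i) :
    ∑ i ∈ s, ∑ j ∈ s, (if i < j then (k i : ℝ) * k j * (√(x i ^ m) - √(x j ^ m)) ^ 2 else 0) ≤
      (m - 1) * ∑ i ∈ s, k i * x i ^ m - m * (m - 1) * ∏ i ∈ s, x i ^ k i := by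
  have hamgm := geom_mean_le_arith_mean_distinct_pairs s k m hm x hx
  have hsq : ∑ i ∈ s, (k i : ℝ) * √(x i ^ m) ^ 2 = ∑ i ∈ s, k i * x i ^ m :=
    sum_congr rfl fun i hi => by rw [sq_sqrt (pow_nonneg (hx i hi) m)]
  rw [sum_sum_ite_lt_mul_mul_sub_sq, ← Nat.cast_sum, hm, hsq]
  linarith

theorem weighted_amgm_pairs_general (m s : ℕ) (hs : 2 ≤ s)
    (x : ℕ → ℝ) (hx : ∀ i ∈ Finset.Icc 1 s, 0 ≤ x i)
    (k : ℕ → ℕ) (hk : ∀ i ∈ Finset.Icc 1 s, 1 ≤ k i)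
    (hksum : ∑ i ∈ Finset.Icc 1 s, k i = m) :
    (∑ i ∈ Finset.Icc 1 s, (k i : ℝ) * x i ^ m) / m - ∏ i ∈ Finset.Icc 1 s, x i ^ k i ≥
      (1 / (m * (m - 1) : ℝ)) *
        ∑ i ∈ Finset.Icc 1 s, ∑ j ∈ Finset.Icc 1 s,
          if i < j then (Real.sqrt (x i ^ m) - Real.sqrt (x j ^ m)) ^ 2 else 0 := by
  have hm : (2 : ℝ) ≤ m := by
    have := card_nsmul_le_sum _ _ _ hk
    simp only [Nat.card_Icc, add_tsub_cancel_right, smul_eq_mul, mul_one, hksum] at this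
    exact_mod_cast hs.trans this
  have hweighted := sum_sum_ite_lt_mul_mul_sq_le _ k m hksum x hx
  have hweights : ∑ i ∈ Icc 1 s, ∑ j ∈ Icc 1 s,
        (if i < j then (√(x i ^ m) - √(x j ^ m)) ^ 2 else 0) ≤
      ∑ i ∈ Icc 1 s, ∑ j ∈ Icc 1 s,
        (if i < j then (k i : ℝ) * k j * (√(x i ^ m) - √(x j ^ m)) ^ 2 else 0) := by
    refine sum_le_sum fun i hi => sum_le_sum fun j hj => ?_
    split_ifs
    · exact le_mul_of_one_le_left (sq_nonneg _)
        (one_le_mul_of_one_le_of_one_le (by exact_mod_cast hk i hi) (by exact_mod_cast hk j hj))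
    · exact le_rfl
  have hmean : (∑ i ∈ Icc 1 s, (k i : ℝ) * x i ^ m) / m * (m * (m - 1)) =
      (m - 1) * ∑ i ∈ Icc 1 s, (k i : ℝ) * x i ^ m := by
    field_simp
  rw [ge_iff_le, one_div_mul_eq_div, div_le_iff₀ (by nlinarith), sub_mul, hmean]
  linarith

theorem weighted_amgm_pairs (m s : ℕ) (hs : 2 ≤ s) (hsm : s ≤ m)
    (x : ℕ → ℝ) (hx : ∀ i ∈ Finset.Icc 1 s, 0 ≤ x i)
    (k : ℕ → ℕ) (hk : ∀ i ∈ Finset.Icc 1 s, 1 ≤ k i)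
    (hksum : ∑ i ∈ Finset.Icc 1 s, k i = m) :
    (∑ i ∈ Finset.Icc 1 s, (k i : ℝ) * x i ^ m) / m - ∏ i ∈ Finset.Icc 1 s, x i ^ k i ≥
      (1 / (m * (m - 1) : ℝ)) *
        ∑ i ∈ Finset.Icc 1 s, ∑ j ∈ Finset.Icc 1 s,
          if i < j then (Real.sqrt (x i ^ m) - Real.sqrt (x j ^ m)) ^ 2 else 0 :=
  weighted_amgm_pairs_general m s hs x hx k hk hksum
end

section
/- Let x_1 ≤ x_2 ≤ ... ≤ x_s be nonnegative reals, let m ≥ s ≥ 2, and let k_1, ..., k_s be positive integers with k_1 + ... + k_s = m. Then (k_1 x_1^m + ... + k_s x_s^m)/m - x_1^{k_1} ⋯ x_s^{k_s} ≥ (1/m) · Σ_{j=1}^{⌊s/2⌋} (x_j^{m/2} - x_{s+1-j}^{m/2})². -/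
open Finset Real

/-!
Each x_j with j ≤ s/2 occurs at least once in the product, and so does its mirror
x_{s+1-j}. Moving the weight 1/m from x_j^m and from x_{s+1-j}^m onto their geometric mean
x_j^{m/2} x_{s+1-j}^{m/2}, with weight 2/m, leaves the weighted geometric mean unchanged and
lowers the weighted arithmetic mean by exactly (x_j^{m/2} - x_{s+1-j}^{m/2})² / m.
Weighted AM-GM for the new family gives the inequality.
-/

namespace Finset

variable {ι M : Type*} [DecidableEq ι] [CommMonoid M] {P : Finset ι} {b : ι → ι}

@[to_additive]
theorem prod_union_image_of_injOn (hb : Set.InjOn b P) (hdisj : Disjoint P (P.image b))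
    (f : ι → M) : ∏ i ∈ P ∪ P.image b, f i = ∏ i ∈ P, f i * f (b i) := by
  rw [prod_union hdisj, prod_image hb, prod_mul_distrib]

end Finset

namespace Real

theorem sqrt_mul_sqrt_rpow_two_mul {a b : ℝ} (ha : 0 ≤ a) (hb : 0 ≤ b) (c : ℝ) :
    (√a * √b) ^ (2 * c) = a ^ c * b ^ c := by
  rw [mul_rpow (sqrt_nonneg _) (sqrt_nonneg _), rpow_mul (sqrt_nonneg _),
    rpow_mul (sqrt_nonneg _), rpow_two, rpow_two, sq_sqrt ha, sq_sqrt hb]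

theorem sqrt_sub_sqrt_sq {a b : ℝ} (ha : 0 ≤ a) (hb : 0 ≤ b) :
    (√a - √b) ^ 2 = a + b - 2 * (√a * √b) := by
  rw [sub_sq, sq_sqrt ha, sq_sqrt hb]
  ring

theorem geom_mean_mul_le_arith_mean_add_weighted {ι κ : Type*} (s : Finset ι) (t : Finset κ)
    (w z : ι → ℝ) (v y : κ → ℝ) (hw : ∀ i ∈ s, 0 ≤ w i) (hv : ∀ j ∈ t, 0 ≤ v j)
    (hwv : ∑ i ∈ s, w i + ∑ j ∈ t, v j = 1) (hz : ∀ i ∈ s, 0 ≤ z i) (hy : ∀ j ∈ t, 0 ≤ y j) :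
    (∏ i ∈ s, z i ^ w i) * ∏ j ∈ t, y j ^ v j ≤ ∑ i ∈ s, w i * z i + ∑ j ∈ t, v j * y j := by
  simpa using geom_mean_le_arith_mean_weighted (s.disjSum t) (Sum.elim w v) (Sum.elim z y)
    (by simpa using ⟨hw, hv⟩) (by simpa using hwv) (by simpa using ⟨hz, hy⟩)

theorem geom_mean_add_sum_sq_sub_sqrt_le_arith_mean_weighted {ι : Type*} [DecidableEq ι]
    (s P : Finset ι) (b : ι → ι) (hPs : P ⊆ s) (hbs : ∀ i ∈ P, b i ∈ s) (hb : Set.InjOn b P)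
    (hdisj : Disjoint P (P.image b)) (w z : ι → ℝ) (c : ℝ) (hc : 0 ≤ c)
    (hw : ∀ i ∈ s, 0 ≤ w i) (hcw : ∀ i ∈ P, c ≤ w i ∧ c ≤ w (b i)) (hw1 : ∑ i ∈ s, w i = 1)
    (hz : ∀ i ∈ s, 0 ≤ z i) :
    ∏ i ∈ s, z i ^ w i + c * ∑ i ∈ P, (√(z i) - √(z (b i))) ^ 2 ≤ ∑ i ∈ s, w i * z i := by
  have hAs : P ∪ P.image b ⊆ s := union_subset hPs (image_subset_iff.mpr hbs)
  -- the weight moved from each paired point onto the geometric mean of its pair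
  set p : ι → ℝ := fun i => if i ∈ P ∪ P.image b then c else 0
  have hp : ∀ i ∈ s, 0 ≤ p i ∧ p i ≤ w i := fun i hi => by
    simp only [p]
    split_ifs with hiA
    · refine ⟨hc, ?_⟩
      rcases mem_union.mp hiA with hiP | hib
      · exact (hcw i hiP).1
      · obtain ⟨j, hj, rfl⟩ := mem_image.mp hib
        exact (hcw j hj).2
    · exact ⟨le_rfl, hw i hi⟩
  have hsum_p : ∀ f : ι → ℝ, ∑ i ∈ s, p i * f i = c * ∑ i ∈ P, (f i + f (b i)) := by
    intro f
    simp only [p, ite_mul, zero_mul, sum_ite_mem, inter_eq_right.mpr hAs,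
      sum_union_image_of_injOn hb hdisj, mul_sum, mul_add]
  have hprod_p : ∏ i ∈ s, z i ^ p i = ∏ i ∈ P, (√(z i) * √(z (b i))) ^ (2 * c) := by
    have hpow : ∀ i, z i ^ p i = if i ∈ P ∪ P.image b then z i ^ c else 1 := fun i => by
      simp only [p]; split_ifs <;> simp
    simp only [hpow, prod_ite_mem, inter_eq_right.mpr hAs, prod_union_image_of_injOn hb hdisj]
    exact prod_congr rfl fun i hi =>
      (sqrt_mul_sqrt_rpow_two_mul (hz i (hPs hi)) (hz (b i) (hbs i hi)) c).symm
  have hamgm := geom_mean_mul_le_arith_mean_add_weighted s P (w - p) z (fun _ => 2 * c)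
    (fun i => √(z i) * √(z (b i))) (fun i hi => sub_nonneg.mpr (hp i hi).2)
    (fun _ _ => by positivity)
    (by
      have h := hsum_p 1
      simp only [Pi.one_apply, mul_one, one_add_one_eq_two, mul_sum, mul_comm c 2] at h
      rw [sum_congr rfl fun i _ => Pi.sub_apply w p i, sum_sub_distrib, hw1, h, sub_add_cancel])
    hz (fun _ _ => by positivity)
  have hgeom : ∏ i ∈ s, z i ^ w i
      = (∏ i ∈ s, z i ^ (w - p) i) * ∏ i ∈ P, (√(z i) * √(z (b i))) ^ (2 * c) := by
    rw [← hprod_p, ← prod_mul_distrib]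
    refine prod_congr rfl fun i hi => ?_
    rw [Pi.sub_apply, ← rpow_add_of_nonneg (hz i hi) (sub_nonneg.mpr (hp i hi).2) (hp i hi).1,
      sub_add_cancel]
  have harith : ∑ i ∈ s, (w - p) i * z i + ∑ i ∈ P, 2 * c * (√(z i) * √(z (b i)))
      = ∑ i ∈ s, w i * z i - c * ∑ i ∈ P, (√(z i) - √(z (b i))) ^ 2 := by
    have hsq : ∑ i ∈ P, (√(z i) - √(z (b i))) ^ 2
        = ∑ i ∈ P, (z i + z (b i) - 2 * (√(z i) * √(z (b i)))) :=
      sum_congr rfl fun i hi => sqrt_sub_sqrt_sq (hz i (hPs hi)) (hz (b i) (hbs i hi))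
    rw [sum_congr rfl fun i _ => by rw [Pi.sub_apply, sub_mul], sum_sub_distrib, hsum_p z, hsq,
      sum_sub_distrib, ← mul_sum, ← mul_sum]
    ring
  linarith

end Real

theorem weighted_amgm_opposite_general (m s : ℕ) (hs : 2 ≤ s) (hsm : s ≤ m)
    (x : ℕ → ℝ) (hx : ∀ i ∈ Finset.Icc 1 s, 0 ≤ x i)
    (k : ℕ → ℕ) (hk : ∀ i ∈ Finset.Icc 1 s, 1 ≤ k i)
    (hksum : ∑ i ∈ Finset.Icc 1 s, k i = m) :
    (∑ i ∈ Finset.Icc 1 s, (k i : ℝ) * x i ^ m) / m - ∏ i ∈ Finset.Icc 1 s, x i ^ k i ≥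
      (1 / (m : ℝ)) *
        ∑ j ∈ Finset.Icc 1 (s / 2),
          (Real.sqrt (x j ^ m) - Real.sqrt (x (s + 1 - j) ^ m)) ^ 2 := by
  have hm : (0 : ℝ) < m := by exact_mod_cast (by omega : 0 < m)
  have hweight : ∀ i ∈ Icc 1 s, 1 / (m : ℝ) ≤ k i / m := fun i hi =>
    div_le_div_of_nonneg_right (by exact_mod_cast hk i hi) hm.le
  have key := geom_mean_add_sum_sq_sub_sqrt_le_arith_mean_weighted (Icc 1 s) (Icc 1 (s / 2))
    (fun j => s + 1 - j) (Icc_subset_Icc_right (by omega))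
    (fun j hj => by simp only [mem_Icc] at hj ⊢; omega)
    (fun i hi j hj hij => by simp only [coe_Icc, Set.mem_Icc] at hi hj hij; omega)
    (disjoint_left.mpr fun i hi hi' => by
      simp only [mem_image, mem_Icc] at hi hi'
      omega)
    (fun i => k i / m) (fun i => x i ^ m) (1 / m) (by positivity) (fun _ _ => by positivity)
    (fun j hj => ⟨hweight j (by simp only [mem_Icc] at hj ⊢; omega),
      hweight _ (by simp only [mem_Icc] at hj ⊢; omega)⟩)
    (by rw [← sum_div, div_eq_one_iff_eq hm.ne']; exact_mod_cast hksum)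
    (fun i hi => pow_nonneg (hx i hi) m)
  have hgeom : ∀ i ∈ Icc 1 s, (x i ^ m) ^ ((k i : ℝ) / m) = x i ^ k i := fun i hi => by
    rw [← rpow_natCast (x i) m, ← rpow_mul (hx i hi), mul_div_cancel₀ _ hm.ne', rpow_natCast]
  have harith : ∑ i ∈ Icc 1 s, (k i : ℝ) / m * x i ^ m
      = (∑ i ∈ Icc 1 s, (k i : ℝ) * x i ^ m) / m := by
    rw [sum_div]
    exact sum_congr rfl fun i _ => div_mul_eq_mul_div _ _ _
  rw [prod_congr rfl hgeom, harith] at key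
  linarith

theorem weighted_amgm_opposite (m s : ℕ) (hs : 2 ≤ s) (hsm : s ≤ m)
    (x : ℕ → ℝ) (hx : ∀ i ∈ Finset.Icc 1 s, 0 ≤ x i)
    (hmono : ∀ i ∈ Finset.Icc 1 s, ∀ j ∈ Finset.Icc 1 s, i ≤ j → x i ≤ x j)
    (k : ℕ → ℕ) (hk : ∀ i ∈ Finset.Icc 1 s, 1 ≤ k i)
    (hksum : ∑ i ∈ Finset.Icc 1 s, k i = m) :
    (∑ i ∈ Finset.Icc 1 s, (k i : ℝ) * x i ^ m) / m - ∏ i ∈ Finset.Icc 1 s, x i ^ k i ≥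
      (1 / (m : ℝ)) *
        ∑ j ∈ Finset.Icc 1 (s / 2),
          (Real.sqrt (x j ^ m) - Real.sqrt (x (s + 1 - j) ^ m)) ^ 2 :=
  weighted_amgm_opposite_general m s hs hsm x hx k hk hksum
end

section
/- Let s ≤ m be positive integers and Ω = Σ_{k_j ≥ 1, Σ k_j = m} m!/(k_1!⋯k_s!). For nonnegative reals x_1, ..., x_s, the 'edge Laplacian form' L(e)x^m := Σ_{j=1}^s x_j^m − (s/Ω)·Σ_{k_j ≥ 1, Σk_j = m} (m!/(k_1!⋯k_s!)) x_1^{k_1} ⋯ x_s^{k_s} is nonnegative. -/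
/-!
Weighted AM-GM bounds each monomial: `m * ∏ x_j ^ k_j ≤ ∑ k_j * x_j ^ m`. Summed against the
multinomial weights over the compositions of `m` into `s` positive parts, the right side becomes
`∑_j T_j * x_j ^ m` with `T_j = ∑_k (m! / k!) * k_j`. The set of compositions and the weights are
invariant under permuting coordinates, so all `T_j` are equal, and as `∑_j T_j = m * Ω` each is
`m * Ω / s`. Hence `s * ∑_k (m! / k!) x^k ≤ Ω * ∑_j x_j ^ m`.
-/

open Finset

section PermInvariant

variable {ι : Type*}

theorem Finset.sum_comp_perm_of_comp_perm_mem {M : Type*} [AddCommMonoid M]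
    {S : Finset (ι → ℕ)} (hS : ∀ σ : Equiv.Perm ι, ∀ k ∈ S, k ∘ σ ∈ S)
    (f : (ι → ℕ) → M) (σ : Equiv.Perm ι) :
    ∑ k ∈ S, f (k ∘ σ) = ∑ k ∈ S, f k :=
  sum_nbij' (· ∘ σ) (· ∘ σ.symm) (fun k hk => hS σ k hk) (fun k hk => hS σ.symm k hk)
    (fun k _ => by ext; simp) (fun k _ => by ext; simp) (fun _ _ => rfl)

variable [Fintype ι]

theorem Nat.multinomial_univ_comp_perm (k : ι → ℕ) (σ : Equiv.Perm ι) :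
    Nat.multinomial univ (k ∘ σ) = Nat.multinomial univ k := by
  simp only [Nat.multinomial, Function.comp_apply, Equiv.sum_comp σ k,
    Equiv.prod_comp σ (fun i => (k i).factorial)]

/-- Weighted AM-GM with the weights `k j / m`, cleared of denominators. -/
theorem mul_prod_pow_le_sum_mul_pow {x : ι → ℝ} (hx : ∀ j, 0 ≤ x j) {k : ι → ℕ} {m : ℕ}
    (hk : ∑ j, k j = m) :
    (m : ℝ) * ∏ j, x j ^ k j ≤ ∑ j, (k j : ℝ) * x j ^ m := by
  rcases m.eq_zero_or_pos with rfl | hm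
  · simp only [CharP.cast_eq_zero, zero_mul]
    exact sum_nonneg fun j _ => by positivity
  have hm' : (m : ℝ) ≠ 0 := by positivity
  have amgm := Real.geom_mean_le_arith_mean_weighted univ (fun j => (k j : ℝ) / m)
    (fun j => x j ^ m) (fun j _ => by positivity)
    (by rw [← sum_div, ← Nat.cast_sum, hk, div_self hm'])
    (fun j _ => pow_nonneg (hx j) m)
  have hpow : ∀ j, (x j ^ m) ^ ((k j : ℝ) / m) = x j ^ k j := fun j => by
    rw [← Real.rpow_natCast (x j) m, ← Real.rpow_mul (hx j), mul_div_cancel₀ _ hm',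
      Real.rpow_natCast]
  simp only [hpow] at amgm
  calc (m : ℝ) * ∏ j, x j ^ k j ≤ m * ∑ j, (k j : ℝ) / m * x j ^ m := by gcongr
    _ = ∑ j, (k j : ℝ) * x j ^ m := by
      rw [mul_sum]; exact sum_congr rfl fun j _ => by field_simp

variable {S : Finset (ι → ℕ)} {m : ℕ} {w : (ι → ℕ) → ℝ}

theorem card_mul_sum_mul_apply (hS : ∀ σ : Equiv.Perm ι, ∀ k ∈ S, k ∘ σ ∈ S)
    (hSm : ∀ k ∈ S, ∑ j, k j = m) (hw : ∀ σ : Equiv.Perm ι, ∀ k, w (k ∘ σ) = w k) (j : ι) :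
    (Fintype.card ι : ℝ) * ∑ k ∈ S, w k * k j = m * ∑ k ∈ S, w k := by
  classical
  have hsymm : ∀ i, ∑ k ∈ S, w k * k i = ∑ k ∈ S, w k * k j := fun i => by
    -- reindex by `k ↦ k ∘ swap i j`, which permutes `S` and preserves `w`
    rw [← sum_comp_perm_of_comp_perm_mem hS _ (Equiv.swap i j)]
    simp [hw]
  calc (Fintype.card ι : ℝ) * ∑ k ∈ S, w k * k j = ∑ i, ∑ k ∈ S, w k * k i := by
        simp [hsymm]
    _ = ∑ k ∈ S, w k * ∑ i, (k i : ℝ) := by rw [sum_comm]; simp only [mul_sum]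
    _ = m * ∑ k ∈ S, w k := by
        rw [mul_sum]
        exact sum_congr rfl fun k hk => by rw [← Nat.cast_sum, hSm k hk, mul_comm]

theorem card_mul_sum_mul_prod_pow_le (hS : ∀ σ : Equiv.Perm ι, ∀ k ∈ S, k ∘ σ ∈ S)
    (hSm : ∀ k ∈ S, ∑ j, k j = m) (hw : ∀ σ : Equiv.Perm ι, ∀ k, w (k ∘ σ) = w k)
    (hw₀ : ∀ k ∈ S, 0 ≤ w k) {x : ι → ℝ} (hx : ∀ j, 0 ≤ x j) :
    (Fintype.card ι : ℝ) * ∑ k ∈ S, w k * ∏ j, x j ^ k j ≤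
      (∑ k ∈ S, w k) * ∑ j, x j ^ m := by
  rcases m.eq_zero_or_pos with rfl | hm
  · have hzero : ∀ k ∈ S, k = 0 := fun k hk => funext fun j =>
      (sum_eq_zero_iff.mp (hSm k hk)) j (mem_univ j)
    have hprod : ∑ k ∈ S, w k * ∏ j, x j ^ k j = ∑ k ∈ S, w k :=
      sum_congr rfl fun k hk => by simp [hzero k hk]
    simp [hprod, mul_comm]
  refine le_of_mul_le_mul_left ?_ (by positivity : (0 : ℝ) < m)
  calc (m : ℝ) * ((Fintype.card ι : ℝ) * ∑ k ∈ S, w k * ∏ j, x j ^ k j)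
      = Fintype.card ι * ∑ k ∈ S, w k * (m * ∏ j, x j ^ k j) := by
        simp only [mul_sum]; exact sum_congr rfl fun _ _ => by ring
    _ ≤ Fintype.card ι * ∑ k ∈ S, w k * ∑ j, (k j : ℝ) * x j ^ m := by
        gcongr with k hk
        · exact hw₀ k hk
        · exact mul_prod_pow_le_sum_mul_pow hx (hSm k hk)
    _ = ∑ j, (Fintype.card ι * ∑ k ∈ S, w k * k j) * x j ^ m := by
        simp only [mul_sum, sum_mul]; rw [sum_comm]
        exact sum_congr rfl fun _ _ => sum_congr rfl fun _ _ => by ring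
    _ = m * ((∑ k ∈ S, w k) * ∑ j, x j ^ m) := by
        simp only [card_mul_sum_mul_apply hS hSm hw, ← mul_sum, mul_assoc]

end PermInvariant

theorem Finset.Nat.comp_perm_mem_filter_antidiagonalTuple {s m : ℕ} (σ : Equiv.Perm (Fin s))
    {k : Fin s → ℕ} (hk : k ∈ (Nat.antidiagonalTuple s m).filter (fun k => ∀ j, 1 ≤ k j)) :
    k ∘ σ ∈ (Nat.antidiagonalTuple s m).filter (fun k => ∀ j, 1 ≤ k j) := by
  simp only [mem_filter, Nat.mem_antidiagonalTuple, Function.comp_apply] at hk ⊢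
  exact ⟨by rw [Equiv.sum_comp σ k]; exact hk.1, fun j => hk.2 (σ j)⟩

theorem edge_laplacian_form_nonneg_general (s m : ℕ)
    (x : Fin s → ℝ) (hx : ∀ j, 0 ≤ x j) :
    0 ≤ ∑ j : Fin s, x j ^ m -
      ((s : ℝ) /
          (∑ k ∈ (Finset.Nat.antidiagonalTuple s m).filter (fun k => ∀ j, 1 ≤ k j),
            (Nat.multinomial Finset.univ k : ℝ))) *
        ∑ k ∈ (Finset.Nat.antidiagonalTuple s m).filter (fun k => ∀ j, 1 ≤ k j),
          (Nat.multinomial Finset.univ k : ℝ) * ∏ j : Fin s, x j ^ k j := by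
  set S := (Finset.Nat.antidiagonalTuple s m).filter (fun k => ∀ j, 1 ≤ k j)
  have key := card_mul_sum_mul_prod_pow_le (S := S) (m := m)
    (w := fun k => (Nat.multinomial univ k : ℝ))
    (fun σ k hk => Nat.comp_perm_mem_filter_antidiagonalTuple σ hk)
    (fun k hk => Nat.mem_antidiagonalTuple.mp (mem_filter.mp hk).1)
    (fun σ k => congrArg Nat.cast (Nat.multinomial_univ_comp_perm k σ)) (fun k _ => by positivity) hx
  rw [Fintype.card_fin] at key
  rw [sub_nonneg, div_mul_eq_mul_div]
  -- this also covers `Ω = 0` (no compositions), where `s / Ω = 0`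
  exact div_le_of_le_mul₀ (sum_nonneg fun k _ => by positivity)
    (sum_nonneg fun j _ => pow_nonneg (hx j) m) (key.trans_eq (mul_comm _ _))

theorem edge_laplacian_form_nonneg (s m : ℕ) (hs : 1 ≤ s) (hsm : s ≤ m)
    (x : Fin s → ℝ) (hx : ∀ j, 0 ≤ x j) :
    0 ≤ ∑ j : Fin s, x j ^ m -
      ((s : ℝ) /
          (∑ k ∈ (Finset.Nat.antidiagonalTuple s m).filter (fun k => ∀ j, 1 ≤ k j),
            (Nat.multinomial Finset.univ k : ℝ))) *
        ∑ k ∈ (Finset.Nat.antidiagonalTuple s m).filter (fun k => ∀ j, 1 ≤ k j),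
          (Nat.multinomial Finset.univ k : ℝ) * ∏ j : Fin s, x j ^ k j :=
  edge_laplacian_form_nonneg_general s m x hx
end

section
/- Let s ≤ m be positive integers with x_1 ≤ ... ≤ x_s nonnegative reals, and Ω as above. Then Σ_{j=1}^s x_j^m − (s/Ω)·Σ_{k_j ≥ 1, Σk_j=m} (m!/(k_1!⋯k_s!)) x_1^{k_1}⋯x_s^{k_s} ≥ (s/m) · Σ_{j=1}^{⌊s/2⌋} (√(x_j^m) − √(x_{s+1-j}^m))². -/
/-!
Write `y j = x (j + 1)` and let `σ` be the reversal of `Fin s`. For a composition `k` of `m`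
into `s` positive parts, AM-GM applied to `k j - 1` copies of `y j` together with one copy of
`√(y j * y (σ j))` for each `j` (these `m` numbers have product `∏ y j ^ k j`) gives
`m * ∏ y j ^ k j ≤ ∑ (k j - 1) * y j ^ m + S`, where `S = ∑ √(y j ^ m) * √(y (σ j) ^ m)`.
Permuting coordinates shows that `∑ₖ multinomial k * k j` does not depend on `j`, so it equals
`m Ω / s`. Summing the AM-GM bound with multinomial weights therefore gives
`(s / Ω) ∑ₖ multinomial k * ∏ y j ^ k j ≤ A - (s / m) (A - S)` with `A = ∑ y j ^ m`, and `A - S`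
folds over the pairs `{j, s + 1 - j}` into the sum of squares on the right-hand side.
-/

open Finset Real

theorem Real.sqrt_pow {a : ℝ} (ha : 0 ≤ a) (n : ℕ) : √(a ^ n) = √a ^ n := by
  rw [← Real.sqrt_sq (pow_nonneg (sqrt_nonneg a) n), ← pow_mul, mul_comm, pow_mul, sq_sqrt ha]

theorem mul_prod_pow_le_sum_mul_pow_s14 {ι : Type*} (s : Finset ι) {k : ι → ℕ} {m : ℕ}
    (hk : ∑ i ∈ s, k i = m) {z : ι → ℝ} (hz : ∀ i ∈ s, 0 ≤ z i) :
    (m : ℝ) * ∏ i ∈ s, z i ^ k i ≤ ∑ i ∈ s, k i * z i ^ m := by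
  obtain rfl | hm0 := Nat.eq_zero_or_pos m
  · simp_all
  have hmR : (0 : ℝ) < m := mod_cast hm0
  have amgm := geom_mean_le_arith_mean_weighted s (fun i => (k i : ℝ) / m) (fun i => z i ^ m)
    (fun i _ => by positivity) (by rw [← sum_div, ← Nat.cast_sum, hk, div_self hmR.ne'])
    (fun i hi => pow_nonneg (hz i hi) m)
  have hpow : ∀ i ∈ s, (z i ^ m) ^ ((k i : ℝ) / m) = z i ^ k i := fun i hi => by
    rw [← Real.rpow_natCast (z i) m, ← Real.rpow_mul (hz i hi), mul_div_cancel₀ _ hmR.ne',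
      Real.rpow_natCast]
  rw [prod_congr rfl hpow] at amgm
  calc (m : ℝ) * ∏ i ∈ s, z i ^ k i ≤ m * ∑ i ∈ s, (k i : ℝ) / m * z i ^ m := by gcongr
    _ = ∑ i ∈ s, k i * z i ^ m := by
      rw [mul_sum]; exact sum_congr rfl fun i _ => by field_simp

theorem Real.prod_sqrt_mul_perm {ι : Type*} [Fintype ι] (σ : Equiv.Perm ι) {y : ι → ℝ}
    (hy : ∀ i, 0 ≤ y i) : ∏ i, √(y i * y (σ i)) = ∏ i, y i := by
  simp_rw [Real.sqrt_mul (hy _), prod_mul_distrib, Equiv.prod_comp σ (fun i => √(y i)),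
    ← prod_mul_distrib, Real.mul_self_sqrt (hy _)]

theorem mul_prod_pow_le_sum_pred_mul_pow_add_sum_sqrt {ι : Type*} [Fintype ι] (σ : Equiv.Perm ι)
    {y : ι → ℝ} (hy : ∀ i, 0 ≤ y i) {k : ι → ℕ} (hk : ∀ i, 1 ≤ k i) {m : ℕ} (hkm : ∑ i, k i = m) :
    (m : ℝ) * ∏ i, y i ^ k i ≤
      ∑ i, ((k i : ℝ) - 1) * y i ^ m + ∑ i, √(y i ^ m) * √(y (σ i) ^ m) := by
  have hk' : ∑ i : ι ⊕ ι, Sum.elim (fun i => k i - 1) 1 i = m := by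
    rw [Fintype.sum_sum_type, ← hkm, ← sum_add_distrib]
    exact sum_congr rfl fun i _ => Nat.sub_add_cancel (hk i)
  have key := mul_prod_pow_le_sum_mul_pow_s14 univ hk'
    (z := Sum.elim y fun i => √(y i * y (σ i)))
    (by rintro (i | i) _; exacts [hy i, Real.sqrt_nonneg _])
  simp only [Fintype.prod_sum_type, Fintype.sum_sum_type, Sum.elim_inl, Sum.elim_inr,
    Pi.one_apply, pow_one, Real.prod_sqrt_mul_perm σ hy, Nat.cast_one, one_mul] at key
  rw [← prod_mul_distrib] at key
  convert key using 2
  · exact prod_congr rfl fun i _ => by rw [← pow_succ, Nat.sub_add_cancel (hk i)]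
  · exact sum_congr rfl fun i _ => by rw [Nat.cast_pred (hk i)]
  · exact sum_congr rfl fun i _ => by
      rw [Real.sqrt_mul (hy i), mul_pow, Real.sqrt_pow (hy i), Real.sqrt_pow (hy _)]

def positiveAntidiagonalTuple (s m : ℕ) : Finset (Fin s → ℕ) :=
  (Nat.antidiagonalTuple s m).filter fun k => ∀ j, 1 ≤ k j

namespace positiveAntidiagonalTuple

variable {s m : ℕ}

theorem mem_iff {k : Fin s → ℕ} :
    k ∈ positiveAntidiagonalTuple s m ↔ ∑ j, k j = m ∧ ∀ j, 1 ≤ k j := by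
  rw [positiveAntidiagonalTuple, mem_filter, Nat.mem_antidiagonalTuple]

theorem nonempty (hs : 0 < s) (hsm : s ≤ m) : (positiveAntidiagonalTuple s m).Nonempty := by
  refine ⟨fun j => 1 + if j = ⟨0, hs⟩ then m - s else 0,
    mem_iff.mpr ⟨?_, fun _ => le_add_right le_rfl⟩⟩
  simp only [sum_add_distrib, sum_ite_eq', mem_univ, if_true, sum_const, card_univ,
    Fintype.card_fin, smul_eq_mul, mul_one]
  omega

theorem comp_perm_mem {k : Fin s → ℕ} (hk : k ∈ positiveAntidiagonalTuple s m)
    (σ : Equiv.Perm (Fin s)) : k ∘ σ ∈ positiveAntidiagonalTuple s m := by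
  rw [mem_iff] at hk ⊢
  exact ⟨(Equiv.sum_comp σ k).trans hk.1, fun j => hk.2 (σ j)⟩

end positiveAntidiagonalTuple

theorem Nat.multinomial_univ_comp_equiv {α β : Type*} [Fintype α] [Fintype β] (e : α ≃ β)
    (k : β → ℕ) : Nat.multinomial univ (k ∘ e) = Nat.multinomial univ k := by
  simp only [Nat.multinomial, Function.comp_apply, Equiv.sum_comp e k,
    Equiv.prod_comp e fun i => (k i).factorial]

theorem sum_multinomial_mul_apply_eq {s m : ℕ} (i j : Fin s) :
    ∑ k ∈ positiveAntidiagonalTuple s m, Nat.multinomial univ k * k i =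
      ∑ k ∈ positiveAntidiagonalTuple s m, Nat.multinomial univ k * k j := by
  refine sum_nbij' (· ∘ Equiv.swap i j) (· ∘ Equiv.swap i j)
    (fun k hk => positiveAntidiagonalTuple.comp_perm_mem hk _)
    (fun k hk => positiveAntidiagonalTuple.comp_perm_mem hk _)
    (fun k _ => by ext; simp) (fun k _ => by ext; simp) fun k _ => ?_
  rw [Nat.multinomial_univ_comp_equiv, Function.comp_apply, Equiv.swap_apply_right]

theorem card_mul_sum_multinomial_mul_apply {s m : ℕ} (j : Fin s) :
    s * ∑ k ∈ positiveAntidiagonalTuple s m, Nat.multinomial univ k * k j =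
      m * ∑ k ∈ positiveAntidiagonalTuple s m, Nat.multinomial univ k := by
  calc s * ∑ k ∈ positiveAntidiagonalTuple s m, Nat.multinomial univ k * k j
      = ∑ i : Fin s, ∑ k ∈ positiveAntidiagonalTuple s m, Nat.multinomial univ k * k i := by
        simp [sum_multinomial_mul_apply_eq _ j]
    _ = ∑ k ∈ positiveAntidiagonalTuple s m, Nat.multinomial univ k * m := by
        rw [sum_comm]
        refine sum_congr rfl fun k hk => ?_
        rw [← mul_sum, (positiveAntidiagonalTuple.mem_iff.mp hk).1]
    _ = m * ∑ k ∈ positiveAntidiagonalTuple s m, Nat.multinomial univ k := by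
        rw [← sum_mul, mul_comm]

theorem card_mul_sum_multinomial_mul_sum_mul {s m : ℕ} (a : Fin s → ℝ) :
    (s : ℝ) * ∑ k ∈ positiveAntidiagonalTuple s m, (Nat.multinomial univ k : ℝ) *
        ∑ j, (k j : ℝ) * a j =
      m * (∑ k ∈ positiveAntidiagonalTuple s m, (Nat.multinomial univ k : ℝ)) * ∑ j, a j := by
  have hj (j : Fin s) : (s : ℝ) * ∑ k ∈ positiveAntidiagonalTuple s m,
      (Nat.multinomial univ k : ℝ) * k j =
        m * ∑ k ∈ positiveAntidiagonalTuple s m, (Nat.multinomial univ k : ℝ) := by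
    exact_mod_cast card_mul_sum_multinomial_mul_apply j
  calc (s : ℝ) * ∑ k ∈ positiveAntidiagonalTuple s m, (Nat.multinomial univ k : ℝ) *
        ∑ j, (k j : ℝ) * a j
      = ∑ j, (s : ℝ) * (∑ k ∈ positiveAntidiagonalTuple s m,
          (Nat.multinomial univ k : ℝ) * k j) * a j := by
        simp only [mul_sum, sum_mul]
        rw [sum_comm]
        exact sum_congr rfl fun j _ => sum_congr rfl fun k _ => by ring
    _ = _ := by simp only [hj, mul_sum]

theorem mul_card_mul_sum_multinomial_mul_prod_le {s m : ℕ} (σ : Equiv.Perm (Fin s))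
    {y : Fin s → ℝ} (hy : ∀ j, 0 ≤ y j) :
    (m * s : ℝ) * ∑ k ∈ positiveAntidiagonalTuple s m,
        (Nat.multinomial univ k : ℝ) * ∏ j, y j ^ k j ≤
      (∑ k ∈ positiveAntidiagonalTuple s m, (Nat.multinomial univ k : ℝ)) *
        (m * ∑ j, y j ^ m -
          s * (∑ j, y j ^ m - ∑ j, √(y j ^ m) * √(y (σ j) ^ m))) := by
  set Ω := ∑ k ∈ positiveAntidiagonalTuple s m, (Nat.multinomial univ k : ℝ)
  set D := ∑ j, y j ^ m - ∑ j, √(y j ^ m) * √(y (σ j) ^ m)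
  calc (m * s : ℝ) * ∑ k ∈ positiveAntidiagonalTuple s m,
        (Nat.multinomial univ k : ℝ) * ∏ j, y j ^ k j
      = s * ∑ k ∈ positiveAntidiagonalTuple s m,
          (Nat.multinomial univ k : ℝ) * (m * ∏ j, y j ^ k j) := by
        simp only [mul_sum]
        exact sum_congr rfl fun k _ => by ring
    _ ≤ s * ∑ k ∈ positiveAntidiagonalTuple s m,
          (Nat.multinomial univ k : ℝ) * (∑ j, (k j : ℝ) * y j ^ m - D) := by
        gcongr with k hk
        obtain ⟨hkm, hk⟩ := positiveAntidiagonalTuple.mem_iff.mp hk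
        refine (mul_prod_pow_le_sum_pred_mul_pow_add_sum_sqrt σ hy hk hkm).trans_eq ?_
        simp only [D, sub_mul, one_mul, sum_sub_distrib]
        ring
    _ = Ω * (m * ∑ j, y j ^ m - s * D) := by
        simp only [mul_sub, sum_sub_distrib, ← sum_mul]
        rw [card_mul_sum_multinomial_mul_sum_mul]
        ring

theorem div_mul_sum_pow_sub_sum_sqrt_le {s m : ℕ} (σ : Equiv.Perm (Fin s)) (hs : 0 < s)
    (hsm : s ≤ m) {y : Fin s → ℝ} (hy : ∀ j, 0 ≤ y j) :
    (s / m : ℝ) * (∑ j, y j ^ m - ∑ j, √(y j ^ m) * √(y (σ j) ^ m)) ≤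
      ∑ j, y j ^ m - (s / ∑ k ∈ positiveAntidiagonalTuple s m, (Nat.multinomial univ k : ℝ)) *
        ∑ k ∈ positiveAntidiagonalTuple s m, (Nat.multinomial univ k : ℝ) * ∏ j, y j ^ k j := by
  have hΩ : 0 < ∑ k ∈ positiveAntidiagonalTuple s m, (Nat.multinomial univ k : ℝ) :=
    sum_pos (fun k _ => mod_cast Nat.multinomial_pos _ _)
      (positiveAntidiagonalTuple.nonempty hs hsm)
  have hm : (0 : ℝ) < m := mod_cast hs.trans_le hsm
  have key := mul_card_mul_sum_multinomial_mul_prod_le (m := m) σ hy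
  set Ω := ∑ k ∈ positiveAntidiagonalTuple s m, (Nat.multinomial univ k : ℝ)
  set A := ∑ j, y j ^ m
  set D := A - ∑ j, √(y j ^ m) * √(y (σ j) ^ m)
  rw [div_mul_eq_mul_div, div_mul_eq_mul_div, le_sub_iff_add_le, ← le_sub_iff_add_le',
    div_le_iff₀ hΩ, show (A - s * D / m) * Ω = Ω * (m * A - s * D) / m by field_simp,
    le_div_iff₀ hm]
  linarith

theorem sum_fin_eq_sum_Icc {M : Type*} [AddCommMonoid M] (f : ℕ → M) (s : ℕ) :
    ∑ j : Fin s, f (j + 1) = ∑ j ∈ Icc 1 s, f j := by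
  rw [← sum_range fun j => f (j + 1), range_eq_Ico, sum_Ico_add', zero_add,
    Ico_add_one_right_eq_Icc]

theorem sum_Icc_eq_sum_Icc_half_add_reflect {M : Type*} [AddCommMonoid M] (f : ℕ → M) (s : ℕ) :
    ∑ j ∈ Icc 1 s, f j =
      ∑ j ∈ Icc 1 (s / 2), (f j + f (s + 1 - j)) + if s % 2 = 1 then f (s / 2 + 1) else 0 := by
  have hreflect : ∑ j ∈ Ioc (s - s / 2) s, f j = ∑ j ∈ Ioc 0 (s / 2), f (s + 1 - j) := by
    refine sum_nbij' (fun j => s + 1 - j) (fun j => s + 1 - j) ?_ ?_ ?_ ?_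
      fun j hj => congrArg f ?_ <;> simp only [mem_Ioc] at * <;> omega
  have hmiddle : ∑ j ∈ Ioc (s / 2) (s - s / 2), f j = if s % 2 = 1 then f (s / 2 + 1) else 0 := by
    rcases Nat.mod_two_eq_zero_or_one s with heven | hodd
    · rw [show s - s / 2 = s / 2 by omega, Ioc_self, sum_empty, if_neg (by omega)]
    · rw [show s - s / 2 = s / 2 + 1 by omega, Nat.Ioc_succ_singleton, sum_singleton,
        if_pos hodd]
  have hIcc (n : ℕ) : Icc 1 n = Ioc 0 n := Icc_add_one_left_eq_Ioc 0 n
  rw [hIcc, hIcc, ← sum_Ioc_consecutive f (Nat.zero_le (s / 2)) (by omega : s / 2 ≤ s),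
    ← sum_Ioc_consecutive f (by omega : s / 2 ≤ s - s / 2) (by omega : s - s / 2 ≤ s), hreflect,
    hmiddle, sum_add_distrib, add_assoc, add_comm (ite _ _ _)]

theorem sum_Icc_sq_sub_mul_reflect (a : ℕ → ℝ) (s : ℕ) :
    ∑ j ∈ Icc 1 s, (a j ^ 2 - a j * a (s + 1 - j)) =
      ∑ j ∈ Icc 1 (s / 2), (a j - a (s + 1 - j)) ^ 2 := by
  have hpair : ∀ j ∈ Icc 1 (s / 2), a j ^ 2 - a j * a (s + 1 - j) +
      (a (s + 1 - j) ^ 2 - a (s + 1 - j) * a (s + 1 - (s + 1 - j))) =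
        (a j - a (s + 1 - j)) ^ 2 := fun j hj => by
    rw [mem_Icc] at hj
    rw [show s + 1 - (s + 1 - j) = j by omega]
    ring
  rw [sum_Icc_eq_sum_Icc_half_add_reflect, sum_congr rfl hpair]
  split_ifs with hodd
  · rw [show s + 1 - (s / 2 + 1) = s / 2 + 1 by omega, sq, sub_self, add_zero]
  · rw [add_zero]

theorem edge_laplacian_form_opposite_bound_general (s m : ℕ) (hsm : s ≤ m)
    (x : ℕ → ℝ) (hx : ∀ i ∈ Finset.Icc 1 s, 0 ≤ x i) :
    ∑ j ∈ Finset.Icc 1 s, x j ^ m -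
      ((s : ℝ) /
          (∑ k ∈ (Finset.Nat.antidiagonalTuple s m).filter (fun k => ∀ j, 1 ≤ k j),
            (Nat.multinomial Finset.univ k : ℝ))) *
        ∑ k ∈ (Finset.Nat.antidiagonalTuple s m).filter (fun k => ∀ j, 1 ≤ k j),
          (Nat.multinomial Finset.univ k : ℝ) * ∏ j : Fin s, x (j.val + 1) ^ k j ≥
      ((s : ℝ) / m) *
        ∑ j ∈ Finset.Icc 1 (s / 2),
          (Real.sqrt (x j ^ m) - Real.sqrt (x (s + 1 - j) ^ m)) ^ 2 := by
  obtain rfl | hs := Nat.eq_zero_or_pos s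
  · simp
  have hy (j : Fin s) : 0 ≤ x (j + 1) := hx _ (mem_Icc.mpr ⟨le_add_self, j.isLt⟩)
  have hS : ∑ j : Fin s, √(x (j + 1) ^ m) * √(x (Fin.revPerm j + 1) ^ m) =
      ∑ j ∈ Icc 1 s, √(x j ^ m) * √(x (s + 1 - j) ^ m) := by
    rw [← sum_fin_eq_sum_Icc]
    refine sum_congr rfl fun j _ => ?_
    rw [Fin.revPerm_apply, Fin.val_rev, show s - (j + 1) + 1 = s + 1 - (j + 1) by omega]
  have hT : ∑ j ∈ Icc 1 s, x j ^ m - ∑ j ∈ Icc 1 s, √(x j ^ m) * √(x (s + 1 - j) ^ m) =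
      ∑ j ∈ Icc 1 (s / 2), (√(x j ^ m) - √(x (s + 1 - j) ^ m)) ^ 2 := by
    rw [← sum_Icc_sq_sub_mul_reflect, ← sum_sub_distrib]
    exact sum_congr rfl fun j hj => by rw [sq_sqrt (pow_nonneg (hx j hj) m)]
  have key := div_mul_sum_pow_sub_sum_sqrt_le Fin.revPerm hs hsm hy
  rwa [hS, sum_fin_eq_sum_Icc (fun j => x j ^ m), hT] at key

theorem edge_laplacian_form_opposite_bound (s m : ℕ) (hs : 2 ≤ s) (hsm : s ≤ m)
    (x : ℕ → ℝ) (hx : ∀ i ∈ Finset.Icc 1 s, 0 ≤ x i)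
    (hmono : ∀ i ∈ Finset.Icc 1 s, ∀ j ∈ Finset.Icc 1 s, i ≤ j → x i ≤ x j) :
    ∑ j ∈ Finset.Icc 1 s, x j ^ m -
      ((s : ℝ) /
          (∑ k ∈ (Finset.Nat.antidiagonalTuple s m).filter (fun k => ∀ j, 1 ≤ k j),
            (Nat.multinomial Finset.univ k : ℝ))) *
        ∑ k ∈ (Finset.Nat.antidiagonalTuple s m).filter (fun k => ∀ j, 1 ≤ k j),
          (Nat.multinomial Finset.univ k : ℝ) * ∏ j : Fin s, x (j.val + 1) ^ k j ≥
      ((s : ℝ) / m) *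
        ∑ j ∈ Finset.Icc 1 (s / 2),
          (Real.sqrt (x j ^ m) - Real.sqrt (x (s + 1 - j) ^ m)) ^ 2 :=
  edge_laplacian_form_opposite_bound_general s m hsm x hx
end
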